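/- Correctness of the Set Cover reduction (mathematical content of Proposition 1): let U = {1,...,n}, S = {S_1,...,S_m} ⊆ 2^U, and k ∈ ℕ. There exists a subset T ⊆ S with |T| ≤ k and ∪_{s∈T} s = U if and only if there exists a prenex quantified formula ψ over the unary predicate 'in', with at most k quantifiers ranging over the singleton types Set_1,...,Set_m and at most m−1 logical operators in its quantifier-free part, such that ⟨t_j, I_j⟩ ⊨ ψ for every j ∈ U and ⟨t_d, I_d⟩ ⊭ ψ. -/

import Mathlib

/-! Quantifier-free temporal formulas over predicates `P` and variables `X`,
evaluated on finite traces of states (sets of fluents over objects `O`). -/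

/-- A fluent is a predicate applied to a list of objects. -/
abbrev Fluent (P O : Type) := P × List O

/-- A state is a set of fluents. -/
abbrev PState (P O : Type) := Set (Fluent P O)

/-- Quantifier-free temporal formulas:
`⊤`, atoms `p(x₁,…)`, `¬`, `∧`, `∨`, `⇒`, next `○`, previous `●`,
once (past eventually) `⧫`, and until `U`. -/
inductive TLForm (P X : Type) : Type where
  | top : TLForm P X
  | atom (p : P) (args : List X) : TLForm P X
  | neg (φ : TLForm P X) : TLForm P X
  | conj (φ ψ : TLForm P X) : TLForm P X
  | disj (φ ψ : TLForm P X) : TLForm P X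
  | impl (φ ψ : TLForm P X) : TLForm P X
  | next (φ : TLForm P X) : TLForm P X
  | prev (φ : TLForm P X) : TLForm P X
  | once (φ : TLForm P X) : TLForm P X
  | untl (φ ψ : TLForm P X) : TLForm P X

variable {P X O : Type}

/-- Satisfaction `t, e, i ⊨ φ` of a quantifier-free temporal formula at
position `i` of the trace `⟨t 0, …, t n⟩` (positions range over `0,…,n`),
under environment `e : X → O`. -/
def TLSat (t : ℕ → PState P O) (n : ℕ) (e : X → O) : TLForm P X → ℕ → Prop
  | TLForm.top, _ => True
  | TLForm.atom p xs, i => (p, xs.map e) ∈ t i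
  | TLForm.neg φ, i => ¬ TLSat t n e φ i
  | TLForm.conj φ ψ, i => TLSat t n e φ i ∧ TLSat t n e ψ i
  | TLForm.disj φ ψ, i => TLSat t n e φ i ∨ TLSat t n e ψ i
  | TLForm.impl φ ψ, i => TLSat t n e φ i → TLSat t n e ψ i
  | TLForm.next φ, i => i < n ∧ TLSat t n e φ (i + 1)
  | TLForm.prev φ, i => 0 < i ∧ TLSat t n e φ (i - 1)
  | TLForm.once φ, i => ∃ j, j ≤ i ∧ TLSat t n e φ j
  | TLForm.untl φ ψ, i =>
      ∃ j, i ≤ j ∧ j ≤ n ∧ TLSat t n e ψ j ∧ ∀ k, i ≤ k → k < j → TLSat t n e φ k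

/-- Derived modality `◇φ := ⊤ U φ`. -/
def TLForm.eventually (φ : TLForm P X) : TLForm P X := TLForm.untl TLForm.top φ

/-- Derived modality `□φ := ¬◇¬φ = ¬(⊤ U ¬φ)`. -/
def TLForm.always (φ : TLForm P X) : TLForm P X :=
  TLForm.neg (TLForm.untl TLForm.top (TLForm.neg φ))

/-- Derived past modality `■φ := ¬⧫¬φ`. -/
def TLForm.pastAlways (φ : TLForm P X) : TLForm P X :=
  TLForm.neg (TLForm.once (TLForm.neg φ))

/-! First-order temporal formulas in prenex form: quantifiers `∃x∈τ` and
`∀x∈τ` over typed objects, with a quantifier-free temporal matrix. -/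

/-- Prenex quantified first-order temporal formulas over predicates `P`,
variables `X` and type symbols `T`. -/
inductive FTLForm (P X T : Type) : Type where
  | ex (x : X) (ty : T) (ψ : FTLForm P X T) : FTLForm P X T
  | all (x : X) (ty : T) (ψ : FTLForm P X T) : FTLForm P X T
  | qf (φ : TLForm P X) : FTLForm P X T

variable {T : Type} [DecidableEq X]

/-- Satisfaction `⟨t, I⟩, e ⊨ ψ` of a prenex formula on an instantiated trace
`⟨t 0, …, t n⟩` whose objects are typed by `τfn : O → T`, under environment
`e`. Quantified formulas update the environment; a quantifier-free formula is
evaluated at position `0` of the trace. -/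
def FSat (τfn : O → T) (t : ℕ → PState P O) (n : ℕ) :
    FTLForm P X T → (X → O) → Prop
  | FTLForm.ex x ty ψ, e => ∃ o : O, τfn o = ty ∧ FSat τfn t n ψ (Function.update e x o)
  | FTLForm.all x ty ψ, e => ∀ o : O, τfn o = ty → FSat τfn t n ψ (Function.update e x o)
  | FTLForm.qf φ, e => TLSat t n e φ 0

/-! The Set Cover reduction of Proposition 1. A Set Cover instance is given
by `U = Fin n` and a family `S : Fin m → Set (Fin n)`. The reduction uses a
single unary predicate `in` (the unique element of `Unit`), natural numbers
as variables, objects `S_1,…,S_m` plus a mock object `d`, a singleton type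
`Set_i` for each `S_i`, and the root type for `d`. -/

/-- Objects of the reduction: `Sum.inl i` is the set `S_i`, `Sum.inr ()` is
the mock object `d`. -/
abbrev SCObj (m : ℕ) := Fin m ⊕ Unit

/-- Type symbols of the reduction: `some i` is the singleton type `Set_i`;
`none` is the type of the mock object `d`. -/
abbrev SCType (m : ℕ) := Option (Fin m)

/-- The typing function of the reduction: `τ(S_i) = Set_i`, and `d` gets the
remaining type. -/
def scTau (m : ℕ) : SCObj m → SCType m
  | Sum.inl i => some i
  | Sum.inr _ => none

/-- The single state `I_j = {in(S_i) | j ∈ S_i}` of the trace `t_j`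
associated to the element `j ∈ U`. -/
def scStateJ {n m : ℕ} (S : Fin m → Set (Fin n)) (j : Fin n) :
    PState Unit (SCObj m) :=
  {f | ∃ i : Fin m, j ∈ S i ∧ f = ((), [Sum.inl i])}

/-- The single state `I_d = {in(d)}` of the mock trace `t_d`. -/
def scStateD (m : ℕ) : PState Unit (SCObj m) :=
  {((), [Sum.inr ()])}

/-- The set of variables occurring in the atoms of a quantifier-free formula. -/
def TLForm.vars : TLForm P X → Set X
  | TLForm.top => ∅
  | TLForm.atom _ xs => {x | x ∈ xs}
  | TLForm.neg φ => φ.vars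
  | TLForm.conj φ ψ => φ.vars ∪ ψ.vars
  | TLForm.disj φ ψ => φ.vars ∪ ψ.vars
  | TLForm.impl φ ψ => φ.vars ∪ ψ.vars
  | TLForm.next φ => φ.vars
  | TLForm.prev φ => φ.vars
  | TLForm.once φ => φ.vars
  | TLForm.untl φ ψ => φ.vars ∪ ψ.vars

/-- The set of types quantified upon in a prenex formula. -/
def quantTypes : FTLForm P X T → Set T
  | FTLForm.ex _ ty ψ => insert ty (quantTypes ψ)
  | FTLForm.all _ ty ψ => insert ty (quantTypes ψ)
  | FTLForm.qf _ => ∅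

/-- `ClosedUnder ψ B`: every variable of an atom in the matrix of the prenex
formula `ψ` is either in `B` or bound by one of the quantifiers of `ψ`.
`ClosedUnder ψ ∅` means that `ψ` is a sentence. -/
def ClosedUnder : FTLForm P X T → Set X → Prop
  | FTLForm.ex x _ ψ, B => ClosedUnder ψ (insert x B)
  | FTLForm.all x _ ψ, B => ClosedUnder ψ (insert x B)
  | FTLForm.qf φ, B => φ.vars ⊆ B

/-- The number of logical operators (connective nodes of the syntax tree) of
a quantifier-free temporal formula. -/
def TLForm.numOps : TLForm P X → ℕ
  | TLForm.top => 0
  | TLForm.atom _ _ => 0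
  | TLForm.neg φ => φ.numOps + 1
  | TLForm.conj φ ψ => φ.numOps + ψ.numOps + 1
  | TLForm.disj φ ψ => φ.numOps + ψ.numOps + 1
  | TLForm.impl φ ψ => φ.numOps + ψ.numOps + 1
  | TLForm.next φ => φ.numOps + 1
  | TLForm.prev φ => φ.numOps + 1
  | TLForm.once φ => φ.numOps + 1
  | TLForm.untl φ ψ => φ.numOps + ψ.numOps + 1

/-- The number of quantifiers of a prenex formula. -/
def numQuant : FTLForm P X T → ℕ
  | FTLForm.ex _ _ ψ => numQuant ψ + 1
  | FTLForm.all _ _ ψ => numQuant ψ + 1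
  | FTLForm.qf _ => 0

/-- The quantifier-free matrix of a prenex formula. -/
def qfPart : FTLForm P X T → TLForm P X
  | FTLForm.ex _ _ ψ => qfPart ψ
  | FTLForm.all _ _ ψ => qfPart ψ
  | FTLForm.qf φ => φ

/-! Every type `Set_i` has the single object `S_i`, so a quantifier over it just binds its
variable to `S_i`. A cover `S_{i₁}, …, S_{i_r}` gives the sentence
`∃x_{i₁}∈Set_{i₁}. … ∃x_{i_r}∈Set_{i_r}. in(x_{i₁}) ∨ … ∨ in(x_{i_r})` with `r - 1` operators,
true in `I_j` exactly when some `S_{i_l}` contains `j`, and false in `I_d`.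
Conversely, if `j` lies in none of the sets quantified by a sentence `ψ`, every atom of `ψ`
is false both in `I_j` and in `I_d`, so `ψ` cannot separate the two traces: the at most `k`
quantified sets cover `U`. -/

theorem TLSat_congr {P X O : Type} {t t' : ℕ → PState P O} {n : ℕ} {e : X → O} (G : Set O)
    (hG : ∀ p (os : List O), (∀ o ∈ os, o ∈ G) → ∀ i, (p, os) ∈ t i ↔ (p, os) ∈ t' i)
    {φ : TLForm P X} (he : φ.vars ⊆ e ⁻¹' G) (i : ℕ) :
    TLSat t n e φ i ↔ TLSat t' n e φ i := by
  induction φ generalizing i with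
  | top => rfl
  | atom p xs => exact hG p _ (by simpa [TLForm.vars, Set.subset_def] using he) i
  | neg φ ih | next φ ih | prev φ ih | once φ ih => simp only [TLSat, ih he]
  | conj φ ψ ihφ ihψ | disj φ ψ ihφ ihψ | impl φ ψ ihφ ihψ | untl φ ψ ihφ ihψ =>
    rw [TLForm.vars, Set.union_subset_iff] at he
    simp only [TLSat, ihφ he.1, ihψ he.2]

theorem insert_subset_preimage_update {X O : Type} [DecidableEq X] {G : Set O} {B : Set X}
    {e : X → O} {x : X} {o : O} (he : B ⊆ e ⁻¹' G) (ho : o ∈ G) :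
    insert x B ⊆ Function.update e x o ⁻¹' G := by
  rintro y (rfl | hy)
  · simpa using ho
  · by_cases hyx : y = x
    · simpa [hyx] using ho
    · simpa [hyx] using he hy

theorem FSat_congr {P X O T : Type} [DecidableEq X] {τfn : O → T} {t t' : ℕ → PState P O}
    {n : ℕ} (G : Set O)
    (hG : ∀ p (os : List O), (∀ o ∈ os, o ∈ G) → ∀ i, (p, os) ∈ t i ↔ (p, os) ∈ t' i)
    {ψ : FTLForm P X T} {B : Set X} {e : X → O} (hcl : ClosedUnder ψ B) (he : B ⊆ e ⁻¹' G)
    (hτ : τfn ⁻¹' quantTypes ψ ⊆ G) :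
    FSat τfn t n ψ e ↔ FSat τfn t' n ψ e := by
  induction ψ generalizing B e with
  | ex x ty ψ ih | all x ty ψ ih =>
    have step (o : O) (ho : τfn o = ty) :
        FSat τfn t n ψ (Function.update e x o) ↔ FSat τfn t' n ψ (Function.update e x o) :=
      ih hcl (insert_subset_preimage_update he (hτ (by simp [ho, quantTypes])))
        ((Set.preimage_mono (Set.subset_insert _ _)).trans hτ)
    simp only [FSat]
    first
    | exact exists_congr fun o => and_congr_right (step o)
    | exact forall_congr' fun o => imp_congr_right (step o)
  | qf φ => exact TLSat_congr G hG (hcl.trans he) 0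

theorem encard_quantTypes_le {P X T : Type} (ψ : FTLForm P X T) :
    (quantTypes ψ).encard ≤ numQuant ψ := by
  induction ψ with
  | ex _ ty ψ ih | all _ ty ψ ih =>
    grw [quantTypes, numQuant, Set.encard_insert_le, ih]
    push_cast; rfl
  | qf φ => simp [quantTypes, numQuant]

theorem card_le_numQuant_of_injective {α P X T : Type} {f : α → T} (hf : f.Injective)
    {ψ : FTLForm P X T} {I : Finset α} (hI : ∀ a ∈ I, f a ∈ quantTypes ψ) :
    I.card ≤ numQuant ψ := by
  have h : (I : Set α).encard ≤ numQuant ψ :=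
    (Set.encard_le_encard_of_injOn hI hf.injOn).trans (encard_quantTypes_le ψ)
  exact_mod_cast h

section SetCover

variable {n m : ℕ}

theorem scTau_eq_some_iff {o : SCObj m} {i : Fin m} : scTau m o = some i ↔ o = Sum.inl i := by
  cases o <;> simp [scTau]

theorem exists_mem_quantTypes_of_separates {S : Fin m → Set (Fin n)} {j : Fin n}
    {ψ : FTLForm Unit ℕ (SCType m)} {e : ℕ → SCObj m} (hcl : ClosedUnder ψ ∅)
    (hty : ∀ ty ∈ quantTypes ψ, ∃ i : Fin m, ty = some i)
    (hJ : FSat (scTau m) (fun _ => scStateJ S j) 0 ψ e)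
    (hD : ¬ FSat (scTau m) (fun _ => scStateD m) 0 ψ e) :
    ∃ i, some i ∈ quantTypes ψ ∧ j ∈ S i := by
  by_contra! hunc
  refine hD ((FSat_congr {o | ∃ i, o = Sum.inl i ∧ j ∉ S i} ?_ hcl (Set.empty_subset _) ?_).1 hJ)
  · rintro p os hos -
    have hJ' : (p, os) ∉ scStateJ S j := by
      rintro ⟨i, hji, ⟨⟩⟩
      obtain ⟨i', hi', hji'⟩ := hos _ (List.mem_singleton_self _)
      exact hji' (Sum.inl_injective hi' ▸ hji)
    have hD' : (p, os) ∉ scStateD m := by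
      rintro ⟨⟩
      obtain ⟨i, hi, -⟩ := hos _ (List.mem_singleton_self _)
      exact Sum.inr_ne_inl hi
    exact iff_of_false hJ' hD'
  · intro o ho
    obtain ⟨i, hi⟩ := hty _ ho
    rw [Set.mem_preimage, hi] at ho
    exact ⟨i, scTau_eq_some_iff.1 hi, hunc i ho⟩

/-- The matrix `in(x_{i₁}) ∨ … ∨ in(x_{i_r})` of the cover sentence, the variable `x_i` being
the number `i`. The empty disjunction is the nullary atom `in()`, which costs no operator and
is false in every state of the reduction. -/
def coverMatrix : List (Fin m) → TLForm Unit ℕ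
  | [] => TLForm.atom () []
  | [i] => TLForm.atom () [(i : ℕ)]
  | i :: j :: l => TLForm.disj (TLForm.atom () [(i : ℕ)]) (coverMatrix (j :: l))

def coverQuant : List (Fin m) → TLForm Unit ℕ → FTLForm Unit ℕ (SCType m)
  | [], φ => FTLForm.qf φ
  | i :: l, φ => FTLForm.ex (i : ℕ) (some i) (coverQuant l φ)

def bindSets : List (Fin m) → (ℕ → SCObj m) → ℕ → SCObj m
  | [], e => e
  | i :: l, e => bindSets l (Function.update e (i : ℕ) (Sum.inl i))

theorem numOps_coverMatrix_le (l : List (Fin m)) : (coverMatrix l).numOps ≤ l.length - 1 := by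
  induction l using coverMatrix.induct with
  | case1 | case2 => simp [coverMatrix, TLForm.numOps]
  | case3 i j l ih =>
    simp only [coverMatrix, TLForm.numOps, List.length_cons] at ih ⊢
    omega

theorem vars_coverMatrix_subset (l : List (Fin m)) :
    (coverMatrix l).vars ⊆ {x | ∃ i ∈ l, (i : ℕ) = x} := by
  induction l using coverMatrix.induct with
  | case1 => simp [coverMatrix, TLForm.vars]
  | case2 i => simp [coverMatrix, TLForm.vars]
  | case3 i j l ih =>
    rw [coverMatrix, TLForm.vars, Set.union_subset_iff]
    exact ⟨by simp [TLForm.vars],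
      ih.trans fun x ⟨i', hi', hx⟩ => ⟨i', List.mem_cons_of_mem _ hi', hx⟩⟩

theorem TLSat_coverMatrix_iff {t : ℕ → PState Unit (SCObj m)} {n p : ℕ} {e : ℕ → SCObj m}
    (ht : ((), []) ∉ t p) (l : List (Fin m)) :
    TLSat t n e (coverMatrix l) p ↔ ∃ i ∈ l, ((), [e i]) ∈ t p := by
  induction l using coverMatrix.induct with
  | case1 => simpa [coverMatrix, TLSat] using ht
  | case2 i => simp [coverMatrix, TLSat]
  | case3 i j l ih =>
    simp [coverMatrix, TLSat, ih]

theorem numQuant_coverQuant (l : List (Fin m)) (φ : TLForm Unit ℕ) :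
    numQuant (coverQuant l φ) = l.length := by
  induction l <;> simp [coverQuant, numQuant, *]

theorem qfPart_coverQuant (l : List (Fin m)) (φ : TLForm Unit ℕ) :
    qfPart (coverQuant l φ) = φ := by
  induction l <;> simp [coverQuant, qfPart, *]

theorem quantTypes_coverQuant (l : List (Fin m)) (φ : TLForm Unit ℕ) :
    ∀ ty ∈ quantTypes (coverQuant l φ), ∃ i : Fin m, ty = some i := by
  induction l with
  | nil => simp [coverQuant, quantTypes]
  | cons i l ih =>
    simp only [coverQuant, quantTypes, Set.forall_mem_insert]
    exact ⟨⟨i, rfl⟩, ih⟩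

theorem closedUnder_coverQuant (l : List (Fin m)) {φ : TLForm Unit ℕ} {B : Set ℕ}
    (hφ : φ.vars ⊆ {x | ∃ i ∈ l, (i : ℕ) = x} ∪ B) : ClosedUnder (coverQuant l φ) B := by
  induction l generalizing B with
  | nil => simpa [coverQuant, ClosedUnder] using hφ
  | cons i l ih =>
    apply ih
    refine hφ.trans ?_
    rintro x (⟨i', hi', rfl⟩ | hx)
    · rcases List.mem_cons.1 hi' with rfl | hi'
      · exact Or.inr (Set.mem_insert _ _)
      · exact Or.inl ⟨i', hi', rfl⟩
    · exact Or.inr (Set.mem_insert_of_mem _ hx)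

theorem bindSets_apply_of_forall_ne {l : List (Fin m)} {x : ℕ} (hx : ∀ i ∈ l, (i : ℕ) ≠ x)
    (e : ℕ → SCObj m) : bindSets l e x = e x := by
  induction l generalizing e with
  | nil => rfl
  | cons i l ih =>
    rw [bindSets, ih (fun i' hi' => hx i' (List.mem_cons_of_mem _ hi')),
      Function.update_of_ne (hx i List.mem_cons_self).symm]

theorem bindSets_apply_of_mem {l : List (Fin m)} {i : Fin m} (hi : i ∈ l) (e : ℕ → SCObj m) :
    bindSets l e i = Sum.inl i := by
  induction l generalizing e with
  | nil => simp at hi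
  | cons i' l ih =>
    rw [bindSets]
    by_cases hil : i ∈ l
    · exact ih hil _
    · obtain rfl : i = i' := by simpa [hil] using hi
      rw [bindSets_apply_of_forall_ne, Function.update_self]
      rintro i'' hi'' h
      exact hil (Fin.val_injective h ▸ hi'')

theorem FSat_coverQuant_iff {t : ℕ → PState Unit (SCObj m)} {n : ℕ} (l : List (Fin m))
    (φ : TLForm Unit ℕ) (e : ℕ → SCObj m) :
    FSat (scTau m) t n (coverQuant l φ) e ↔ TLSat t n (bindSets l e) φ 0 := by
  induction l generalizing e with
  | nil => rfl
  | cons i l ih =>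
    simp only [coverQuant, FSat, bindSets, scTau_eq_some_iff, exists_eq_left, ih]

end SetCover

/-- correctness of the Set Cover reduction (Proposition 1).
There is a subfamily `T ⊆ S` of at most `k` sets covering `U = Fin n` iff
there is a closed prenex formula `ψ` over the unary predicate `in`, with at
most `k` quantifiers all ranging over the singleton types `Set_1,…,Set_m`
and at most `m - 1` logical operators in its quantifier-free part, that is
satisfied by `⟨t_j, I_j⟩` for every `j ∈ U` and falsified by `⟨t_d, I_d⟩`. -/
theorem set_cover_reduction_correct (n m : ℕ) (S : Fin m → Set (Fin n))
    (k : ℕ) (e : ℕ → SCObj m) :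
    (∃ I : Finset (Fin m), I.card ≤ k ∧ ∀ j : Fin n, ∃ i ∈ I, j ∈ S i) ↔
    (∃ ψ : FTLForm Unit ℕ (SCType m),
      ClosedUnder ψ (∅ : Set ℕ) ∧
      numQuant ψ ≤ k ∧
      (qfPart ψ).numOps ≤ m - 1 ∧
      (∀ ty ∈ quantTypes ψ, ∃ i : Fin m, ty = some i) ∧
      (∀ j : Fin n, FSat (scTau m) (fun _ => scStateJ S j) 0 ψ e) ∧
      ¬ FSat (scTau m) (fun _ => scStateD m) 0 ψ e) := by
  constructor
  · rintro ⟨I, hcard, hcover⟩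
    set l := I.toList
    have hlen : l.length ≤ m := by simpa [l] using I.card_le_univ
    refine ⟨coverQuant l (coverMatrix l),
      closedUnder_coverQuant l fun x hx => Or.inl (vars_coverMatrix_subset l hx),
      by simpa [numQuant_coverQuant, l] using hcard, ?_, quantTypes_coverQuant l _,
      fun j => ?_, ?_⟩
    · rw [qfPart_coverQuant]
      exact (numOps_coverMatrix_le l).trans (by omega)
    · rw [FSat_coverQuant_iff, TLSat_coverMatrix_iff (by rintro ⟨_, _, ⟨⟩⟩)]
      obtain ⟨i, hi, hji⟩ := hcover j
      have hil : i ∈ l := Finset.mem_toList.2 hi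
      exact ⟨i, hil, by rw [bindSets_apply_of_mem hil]; exact ⟨i, hji, rfl⟩⟩
    · rw [FSat_coverQuant_iff, TLSat_coverMatrix_iff (by simp [scStateD])]
      rintro ⟨i, hil, hd⟩
      rw [bindSets_apply_of_mem hil] at hd
      simp [scStateD] at hd
  · rintro ⟨ψ, hcl, hq, -, hty, hJ, hD⟩
    classical
    refine ⟨Finset.univ.filter fun i => some i ∈ quantTypes ψ,
      (card_le_numQuant_of_injective (Option.some_injective _) (by simp)).trans hq, fun j => ?_⟩
    obtain ⟨i, hi, hji⟩ := exists_mem_quantTypes_of_separates hcl hty (hJ j) hD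
    exact ⟨i, by simpa using hi, hji⟩
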